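/- arXiv:1807.02094 — 3 statements merged into one kernel-verified Lean document; each statement's English description precedes it below -/
import Mathlib

section
/- Let G be a simple graph on a finite vertex set V, and let A, A' ⊆ V. Then |∂A| + |∂A'| ≥ |∂(A \ A')| + |∂(A' \ A)|. -/
/-- The edge boundary of a vertex set `A`: edges of `G` with exactly one endpoint in `A`. -/
def edgeBoundary {V : Type*} (G : SimpleGraph V) (A : Set V) : Set (Sym2 V) :=
  {e | e ∈ G.edgeSet ∧ ∃ u v : V, e = s(u, v) ∧ u ∈ A ∧ v ∉ A}

lemma mem_edgeBoundary_iff {V : Type*} (G : SimpleGraph V) (S : Set V) (a b : V) :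
    s(a, b) ∈ edgeBoundary G S ↔
      s(a, b) ∈ G.edgeSet ∧ ((a ∈ S ∧ b ∉ S) ∨ (b ∈ S ∧ a ∉ S)) := by
  constructor
  · rintro ⟨he, u, v, huv, hu, hv⟩
    refine ⟨he, ?_⟩
    rw [Sym2.eq_iff] at huv
    rcases huv with ⟨rfl, rfl⟩ | ⟨rfl, rfl⟩
    · exact Or.inl ⟨hu, hv⟩
    · exact Or.inr ⟨hu, hv⟩
  · rintro ⟨he, ⟨ha, hb⟩ | ⟨hb, ha⟩⟩
    · exact ⟨he, a, b, rfl, ha, hb⟩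
    · exact ⟨he, b, a, Sym2.eq_swap, hb, ha⟩

theorem stmt_3 {V : Type*} [Fintype V] (G : SimpleGraph V) (A A' : Set V) :
    (edgeBoundary G (A \ A')).ncard + (edgeBoundary G (A' \ A)).ncard ≤
      (edgeBoundary G A).ncard + (edgeBoundary G A').ncard := by
  classical
  have hcard : ∀ S : Set V,
      (edgeBoundary G S).ncard =
        ∑ e : Sym2 V, if e ∈ edgeBoundary G S then 1 else 0 := by
    intro S
    rw [Set.ncard_eq_toFinset_card', ← Finset.card_filter]
    congr 1
    ext e
    simp
  rw [hcard, hcard, hcard, hcard, ← Finset.sum_add_distrib, ← Finset.sum_add_distrib]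
  apply Finset.sum_le_sum
  intro e _
  induction e using Sym2.ind with
  | _ a b =>
    by_cases hE : s(a, b) ∈ G.edgeSet
    · by_cases ha : a ∈ A <;> by_cases ha' : a ∈ A' <;>
        by_cases hb : b ∈ A <;> by_cases hb' : b ∈ A' <;>
        simp [mem_edgeBoundary_iff, hE, Set.mem_diff, ha, ha', hb, hb']
    · simp [mem_edgeBoundary_iff, hE]
end

section
/- Let n ≥ 2 and N ≥ 4n + 4. Let K_N be the complete graph on N vertices, let M be a matching in K_N (a set of pairwise non-adjacent edges), and let H = K_N − M be the graph obtained from K_N by deleting the edges of M. Then for any k ≤ n edges e_1, …, e_k of H and any two distinct vertices v, w of H, there is a trail (a walk with no repeated edges) in H from v to w whose edge set contains e_1, …, e_k. -/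
/-!
In `K_N` minus a matching every vertex misses at most one other vertex, so any two vertices have
a common neighbour outside any prescribed set of fewer than `N - 2` vertices. Writing the edges
to be covered as `a₁b₁, …, a_kb_k`, the trail `v → x₀ → a₁ → b₁ → x₁ → a₂ → ⋯ → b_k → x_k → w` is
built from the back, each `xᵢ` being a fresh common neighbour (dropped when its two ends
coincide). Every connecting edge contains a fresh vertex, so no edge repeats; at most `3k + 2`
vertices are ever in use, which leaves room for a fresh one as `3k + 4 < N`.
-/

open Finset

namespace SimpleGraph

lemma subsingleton_neighborSet_compl_top_deleteEdges {V : Type*}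
    {M : Set (Sym2 V)} (hM : ∀ e ∈ M, ∀ f ∈ M, e ≠ f → ∀ x : V, x ∈ e → x ∉ f) (u : V) :
    (((⊤ : SimpleGraph V).deleteEdges M)ᶜ.neighborSet u).Subsingleton := by
  intro a ha b hb
  simp only [mem_neighborSet, compl_adj, deleteEdges_adj, top_adj] at ha hb
  by_contra hab
  exact hM _ (by tauto) _ (by tauto) (mt Sym2.congr_right.1 hab) u (Sym2.mem_mk_left u a)
    (Sym2.mem_mk_left u b)

variable {V : Type*} [Fintype V] [DecidableEq V] {G : SimpleGraph V}

lemma exists_adj_adj_notMem (hG : ∀ u, (Gᶜ.neighborSet u).Subsingleton) {S : Finset V}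
    (hS : #S + 2 < Fintype.card V) {u₁ u₂ : V} (hu₁ : u₁ ∈ S) (hu₂ : u₂ ∈ S) :
    ∃ x ∉ S, G.Adj u₁ x ∧ G.Adj x u₂ := by
  classical
  have hnonadj (u : V) : #(univ.filter (Gᶜ.Adj u)) ≤ 1 :=
    card_le_one.2 fun a ha b hb => hG u (by simpa using ha) (by simpa using hb)
  have hcard :
      #(S ∪ univ.filter (Gᶜ.Adj u₁) ∪ univ.filter (Gᶜ.Adj u₂)) < #(univ : Finset V) := by
    grw [card_union_le, card_union_le, hnonadj, hnonadj, card_univ]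
    omega
  obtain ⟨x, -, hx⟩ := exists_mem_notMem_of_card_lt_card hcard
  simp only [mem_union, mem_filter, mem_univ, true_and, not_or, compl_adj] at hx
  obtain ⟨⟨hxS, hx₁⟩, hx₂⟩ := hx
  have hne₁ : u₁ ≠ x := by rintro rfl; exact hxS hu₁
  have hne₂ : u₂ ≠ x := by rintro rfl; exact hxS hu₂
  exact ⟨x, hxS, by simpa [hne₁] using hx₁, (by simpa [hne₂] using hx₂ : G.Adj u₂ x).symm⟩

lemma exists_isTrail_through_fresh_vertex (hG : ∀ u, (Gᶜ.neighborSet u).Subsingleton)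
    {S : Finset V} (hS : #S + 2 < Fintype.card V) {u₁ u₂ : V} (hu₁ : u₁ ∈ S) (hu₂ : u₂ ∈ S) :
    ∃ q : G.Walk u₁ u₂, q.IsTrail ∧ (∀ f ∈ q.edges, ∃ y ∈ f, y ∉ S) ∧
      #(S ∪ q.support.toFinset) ≤ #S + 1 := by
  by_cases hu : u₁ = u₂
  · subst hu
    refine ⟨.nil, by simp, by simp, ?_⟩
    simp [insert_eq_of_mem hu₁]
  obtain ⟨x, hxS, h₁, h₂⟩ := exists_adj_adj_notMem hG hS hu₁ hu₂
  refine ⟨.cons h₁ (.cons h₂ .nil), ?_, ?_, ?_⟩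
  · simp [Walk.isTrail_def, hu, h₁.ne]
  · simp only [Walk.edges_cons, Walk.edges_nil, List.mem_cons, List.not_mem_nil, or_false]
    rintro f (rfl | rfl) <;> exact ⟨x, by simp, hxS⟩
  · have : S ∪ [u₁, x, u₂].toFinset = insert x S := by
      ext y; simp only [mem_union, List.mem_toFinset, List.mem_cons, mem_insert]; aesop
    simp only [Walk.support_cons, Walk.support_nil, this]
    exact card_insert_le x S

/-- The last two conjuncts are the induction invariant: they keep the next edge `s(a, b)` off the
trail built so far and leave room for a fresh vertex. -/
lemma exists_isTrail_forall_mem_edges_of_endpoints_mem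
    (hG : ∀ u, (Gᶜ.neighborSet u).Subsingleton) (A : Finset V) (E : Finset (Sym2 V))
    (hEG : ↑E ⊆ G.edgeSet) (hEA : ∀ e ∈ E, ∀ x ∈ e, x ∈ A)
    (hcard : #A + #E + 2 < Fintype.card V) {v w : V} (hv : v ∈ A) (hw : w ∈ A) :
    ∃ p : G.Walk v w, p.IsTrail ∧ (∀ e ∈ E, e ∈ p.edges) ∧
      (∀ f ∈ p.edges, f ∈ E ∨ ∃ y ∈ f, y ∉ A) ∧ #(A ∪ p.support.toFinset) ≤ #A + #E + 1 := by
  induction E using Finset.induction_on generalizing v with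
  | empty =>
    obtain ⟨q, hq, hqA, hqcard⟩ :=
      exists_isTrail_through_fresh_vertex hG (by simpa using hcard) hv hw
    exact ⟨q, hq, by simp, fun f hf => .inr (hqA f hf), by simpa using hqcard⟩
  | @insert e E he ih =>
    induction e using Sym2.ind with | _ a b => ?_
    have hab : G.Adj a b := hEG (mem_insert_self _ _)
    have ha : a ∈ A := hEA _ (mem_insert_self _ _) a (Sym2.mem_mk_left a b)
    have hb : b ∈ A := hEA _ (mem_insert_self _ _) b (Sym2.mem_mk_right a b)
    rw [card_insert_of_notMem he] at hcard ⊢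
    obtain ⟨p, hp, hEp, hpA, hpcard⟩ := ih (fun f hf => hEG (mem_insert_of_mem hf))
      (fun f hf => hEA f (mem_insert_of_mem hf)) (by omega) hb
    set S := A ∪ p.support.toFinset
    obtain ⟨q, hq, hqS, hqcard⟩ := exists_isTrail_through_fresh_vertex hG (S := S) (by omega)
      (mem_union_left _ hv) (mem_union_left _ ha)
    have hab_p : s(a, b) ∉ p.edges := fun h => by
      rcases hpA _ h with h | ⟨y, hy, hyA⟩
      · exact he h
      · rcases Sym2.mem_iff.mp hy with rfl | rfl <;> contradiction
    have hq_disj : ∀ f ∈ q.edges, f ∉ s(a, b) :: p.edges := by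
      intro f hf hf'
      obtain ⟨y, hyf, hyS⟩ := hqS f hf
      rcases List.mem_cons.mp hf' with rfl | hf'
      · rcases Sym2.mem_iff.mp hyf with rfl | rfl <;> exact hyS (mem_union_left _ ‹_›)
      · exact hyS (mem_union_right _ (List.mem_toFinset.2
          (Walk.mem_support_iff_exists_mem_edges.2 (.inr ⟨f, hf', hyf⟩))))
    refine ⟨q.append (.cons hab p), ?_, ?_, ?_, ?_⟩
    · rw [Walk.isTrail_append, Walk.isTrail_cons]
      exact ⟨hq, ⟨hp, hab_p⟩, List.disjoint_left.2 (by simpa using hq_disj)⟩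
    · intro f hf
      rw [Walk.edges_append, Walk.edges_cons]
      rcases mem_insert.mp hf with rfl | hf
      · simp
      · simp [hEp f hf]
    · intro f hf
      rw [Walk.edges_append, Walk.edges_cons, List.mem_append, List.mem_cons] at hf
      rcases hf with hf | rfl | hf
      · obtain ⟨y, hyf, hyS⟩ := hqS f hf
        exact .inr ⟨y, hyf, fun hy => hyS (mem_union_left _ hy)⟩
      · exact .inl (mem_insert_self _ _)
      · exact (hpA f hf).imp_left mem_insert_of_mem
    · have hsub : A ∪ (q.append (.cons hab p)).support.toFinset ⊆ S ∪ q.support.toFinset := by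
        intro y
        simp only [Walk.support_append, Walk.support_cons, List.tail_cons, mem_union,
          List.mem_toFinset, List.mem_append, S]
        tauto
      grw [hsub, hqcard, hpcard]
      omega

theorem exists_isTrail_forall_mem_edges (hG : ∀ u, (Gᶜ.neighborSet u).Subsingleton)
    (E : Finset (Sym2 V)) (hEG : ↑E ⊆ G.edgeSet) (hcard : 3 * #E + 4 < Fintype.card V)
    (v w : V) : ∃ p : G.Walk v w, p.IsTrail ∧ ∀ e ∈ E, e ∈ p.edges := by
  let A := insert v (insert w (E.biUnion Sym2.toFinset))
  have hA : #A ≤ 2 * #E + 2 := by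
    have := card_biUnion_le_card_mul E Sym2.toFinset 2 fun e _ => by
      rw [Sym2.card_toFinset]; split_ifs <;> omega
    grw [card_insert_le, card_insert_le, this]
    omega
  have hEA : ∀ e ∈ E, ∀ x ∈ e, x ∈ A := fun e he x hx =>
    mem_insert_of_mem <| mem_insert_of_mem <| mem_biUnion.2 ⟨e, he, Sym2.mem_toFinset.2 hx⟩
  obtain ⟨p, hp, hEp, -⟩ :=
    exists_isTrail_forall_mem_edges_of_endpoints_mem hG A E hEG hEA (by omega)
      (mem_insert_self v _) (mem_insert_of_mem (mem_insert_self w _))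
  exact ⟨p, hp, hEp⟩

end SimpleGraph

open SimpleGraph

theorem stmt_9_general (n N : ℕ) (hn : 2 ≤ n) (hN : 4 * n + 4 ≤ N)
    (M : Set (Sym2 (Fin N)))
    (hM₂ : ∀ e ∈ M, ∀ f ∈ M, e ≠ f → ∀ x : Fin N, x ∈ e → x ∉ f)
    (E : Finset (Sym2 (Fin N)))
    (hE : ↑E ⊆ ((⊤ : SimpleGraph (Fin N)).deleteEdges M).edgeSet)
    (hEcard : E.card ≤ n) (v w : Fin N) :
    ∃ p : ((⊤ : SimpleGraph (Fin N)).deleteEdges M).Walk v w,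
      p.IsTrail ∧ ∀ e ∈ E, e ∈ p.edges :=
  exists_isTrail_forall_mem_edges (subsingleton_neighborSet_compl_top_deleteEdges hM₂) E hE
    (by rw [Fintype.card_fin]; omega) v w

theorem stmt_9 (n N : ℕ) (hn : 2 ≤ n) (hN : 4 * n + 4 ≤ N)
    (M : Set (Sym2 (Fin N)))
    (hM₁ : M ⊆ (⊤ : SimpleGraph (Fin N)).edgeSet)
    (hM₂ : ∀ e ∈ M, ∀ f ∈ M, e ≠ f → ∀ x : Fin N, x ∈ e → x ∉ f)
    (E : Finset (Sym2 (Fin N)))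
    (hE : ↑E ⊆ ((⊤ : SimpleGraph (Fin N)).deleteEdges M).edgeSet)
    (hEcard : E.card ≤ n) (v w : Fin N) (hvw : v ≠ w) :
    ∃ p : ((⊤ : SimpleGraph (Fin N)).deleteEdges M).Walk v w,
      p.IsTrail ∧ ∀ e ∈ E, e ∈ p.edges :=
  stmt_9_general n N hn hN M hM₂ E hE hEcard v w
end

section
/- Let n ≥ 1 and let X be a continuum which is (n+1)-cc. Then for every finite set S ⊆ X with 1 ≤ |S| ≤ n, the complement X \ S has at most |S| connected components. -/
open Set Topology

/-- An arc in a topological space: a subspace homeomorphic to the closed unit interval. -/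
def IsArc {X : Type*} [TopologicalSpace X] (A : Set X) : Prop :=
  Nonempty (Set.Icc (0:ℝ) 1 ≃ₜ A)

/-- A simple closed curve: a subspace homeomorphic to the unit circle. -/
def IsSimpleClosedCurve {X : Type*} [TopologicalSpace X] (A : Set X) : Prop :=
  Nonempty (Circle ≃ₜ A)

/-- `X` is `n`-ac: every set of at most `n` points lies on an arc. -/
def NArcConnected (X : Type*) [TopologicalSpace X] (n : ℕ) : Prop :=
  ∀ S : Finset X, S.card ≤ n → ∃ A : Set X, IsArc A ∧ ↑S ⊆ A

/-- `X` is `n`-cc: every set of at most `n` points lies on a simple closed curve. -/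
def NCircleConnected (X : Type*) [TopologicalSpace X] (n : ℕ) : Prop :=
  ∀ S : Finset X, S.card ≤ n → ∃ A : Set X, IsSimpleClosedCurve A ∧ ↑S ⊆ A

/-- `A` is an arc with endpoints `x` and `y`. -/
def IsArcWithEndpoints {X : Type*} [TopologicalSpace X] (A : Set X) (x y : X) : Prop :=
  ∃ e : Set.Icc (0:ℝ) 1 ≃ₜ A,
    (e ⟨0, Set.left_mem_Icc.mpr zero_le_one⟩ : X) = x ∧
    (e ⟨1, Set.right_mem_Icc.mpr zero_le_one⟩ : X) = y

/-- `X` is 3-sac: for any three points there is an arc from the first to the third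
through the second. -/
def ThreeSAC (X : Type*) [TopologicalSpace X] : Prop :=
  ∀ x₁ x₂ x₃ : X, ∃ A : Set X, IsArcWithEndpoints A x₁ x₃ ∧ x₂ ∈ A

/-- `X` is a continuum: nonempty (via connectedness), compact, connected, metrizable. -/
def IsContinuum (X : Type*) [TopologicalSpace X] : Prop :=
  CompactSpace X ∧ ConnectedSpace X ∧ TopologicalSpace.MetrizableSpace X

/-- Every nondegenerate subcontinuum has nonempty interior. -/
def CompletelyRegular (X : Type*) [TopologicalSpace X] : Prop :=
  ∀ K : Set X, IsCompact K → IsConnected K → K.Nontrivial → (interior K).Nonempty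

/-!
Pick points in `|S| + 1` distinct components of `X \ S` and a simple closed curve through them.
The curve meets `S` in at most `|S|` points, and a circle with `k ≥ 1` points removed falls
into at most `k` arcs: two points at angles `θ₁ ≤ θ₂` (measured from a removed point) lie on a
common arc as soon as the same number of removed points precede them. Hence two of the chosen
points are joined by an arc avoiding `S`, so they lie in the same component of `X \ S`.
-/

open Function Finset

theorem ENat.card_le_of_forall_finset_card_le {α : Type*} {k : ℕ}
    (h : ∀ s : Finset α, s.card ≤ k + 1 → s.card ≤ k) : ENat.card α ≤ k := by
  by_contra! hk
  obtain ⟨t, -, ht⟩ := Set.exists_subset_encard_eq (s := Set.univ)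
    (k := (k + 1 : ℕ)) (by rw [Set.encard_univ]; exact Order.add_one_le_of_lt hk)
  have ht_fin := Set.finite_of_encard_eq_coe ht
  have hcard : t.ncard = k + 1 := by
    have := ht_fin.cast_ncard_eq
    rw [ht] at this
    exact_mod_cast this
  have := h ht_fin.toFinset
  rw [← Set.ncard_eq_toFinset_card t ht_fin, hcard] at this
  omega

theorem ENat.card_le_card_of_factorsThrough {α β γ : Type*} {q : α → γ} {g : α → β}
    (hq : Surjective q) (h : q.FactorsThrough g) : ENat.card γ ≤ ENat.card β :=
  ENat.card_le_card_of_injective (f := g ∘ surjInv hq) fun c₁ c₂ hc => by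
    simpa only [surjInv_eq] using h hc

theorem ConnectedComponents.mk_eq_of_isPreconnected {X : Type*} [TopologicalSpace X] {s : Set X}
    {P : Set X} (hP : IsPreconnected P) (hPs : P ⊆ s) {x y : s} (hx : (x : X) ∈ P)
    (hy : (y : X) ∈ P) : ConnectedComponents.mk x = ConnectedComponents.mk y := by
  have hP' : IsPreconnected (Subtype.val ⁻¹' P : Set s) := by
    rwa [← Topology.IsInducing.subtypeVal.isPreconnected_image,
      Set.image_preimage_eq_of_subset (by simpa using hPs)]
  exact (ConnectedComponents.coe_eq_coe'.mpr (hP'.subset_connectedComponent hx hy)).symm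

theorem Continuous.card_le_card_connectedComponents_preimage {X Y : Type*} [TopologicalSpace X]
    [TopologicalSpace Y] {φ : Y → X} (hφ : Continuous φ) {s : Set X}
    (C : Finset (ConnectedComponents s))
    (hC : ∀ c ∈ C, ∃ x : s, (x : X) ∈ Set.range φ ∧ ConnectedComponents.mk x = c) :
    (C.card : ℕ∞) ≤ ENat.card (ConnectedComponents (φ ⁻¹' s)) := by
  set Φ := (hφ.restrictPreimage (s := s)).connectedComponentsMap
  have hCΦ : (C : Set (ConnectedComponents s)) ⊆ Set.range Φ := by
    intro c hc
    obtain ⟨x, ⟨y, hy⟩, rfl⟩ := hC c hc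
    refine ⟨ConnectedComponents.mk ⟨y, by simp [hy]⟩, ?_⟩
    simp only [Φ, Continuous.connectedComponentsMap_mk]
    congr 1
    exact Subtype.ext hy
  calc (C.card : ℕ∞) = (C : Set (ConnectedComponents s)).encard := by simp
    _ ≤ (Set.range Φ).encard := Set.encard_le_encard hCΦ
    _ ≤ _ := ENat.card_le_card_of_injective (Set.rangeSplitting_injective Φ)

theorem Finset.apply_notMem_Icc_of_card_filter_lt_eq {ι α : Type*} [LinearOrder α]
    (s : Finset ι) (f : ι → α) {x y : α} (hy : ∀ i ∈ s, f i ≠ y)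
    (h : #{i ∈ s | f i < x} = #{i ∈ s | f i < y}) {i : ι} (hi : i ∈ s) :
    f i ∉ Set.Icc x y := by
  rintro ⟨hxi, hiy⟩
  have hsub : ({i ∈ s | f i < x} : Finset ι) ⊆ {i ∈ s | f i < y} :=
    Finset.monotone_filter_right s fun j _ (hj : f j < x) => hj.trans_le (hxi.trans hiy)
  have heq := Finset.eq_of_subset_of_card_le hsub h.ge
  have : i ∈ ({i ∈ s | f i < y} : Finset ι) :=
    Finset.mem_filter.mpr ⟨hi, hiy.lt_of_ne (hy i hi)⟩
  rw [← heq, Finset.mem_filter] at this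
  exact this.2.not_ge hxi

namespace Circle

open Real

noncomputable def argIoc (a : ℝ) (w : Circle) : ℝ :=
  toIocMod two_pi_pos a (Complex.arg w)

theorem argIoc_mem_Ioc (a : ℝ) (w : Circle) : argIoc a w ∈ Set.Ioc a (a + 2 * π) :=
  toIocMod_mem_Ioc _ _ _

theorem exp_argIoc (a : ℝ) (w : Circle) : exp (argIoc a w) = w := by
  rw [argIoc, toIocMod, periodic_exp.sub_zsmul_eq, exp_arg]

theorem argIoc_injective (a : ℝ) : Injective (argIoc a) :=
  LeftInverse.injective (exp_argIoc a)

theorem argIoc_exp {a τ : ℝ} (hτ : τ ∈ Set.Ioc a (a + 2 * π)) : argIoc a (exp τ) = τ :=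
  exp_injOn_Ioc (by linarith) (argIoc_mem_Ioc a _) hτ (exp_argIoc a _)

theorem argIoc_arg (w : Circle) : argIoc (Complex.arg w) w = Complex.arg w + 2 * π := by
  have := argIoc_exp (a := Complex.arg w) ⟨by linarith [two_pi_pos], le_rfl⟩
  rwa [exp_add_two_pi, exp_arg] at this

theorem card_connectedComponents_compl_le_card {F : Finset Circle} (hF : F.Nonempty) :
    ENat.card (ConnectedComponents ↥((F : Set Circle)ᶜ)) ≤ #F := by
  obtain ⟨s₀, hs₀⟩ := hF
  set a := Complex.arg (s₀ : ℂ)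
  -- `s₀` sits at the end of the angular order starting at `s₀`, so it is never counted.
  let g : ↥((F : Set Circle)ᶜ) → Fin #F := fun w =>
    ⟨#{u ∈ F | argIoc a u < argIoc a w}, Finset.card_lt_card <| Finset.filter_ssubset.mpr
      ⟨s₀, hs₀, by rw [argIoc_arg]; exact (argIoc_mem_Ioc a w).2.not_gt⟩⟩
  calc ENat.card _ ≤ ENat.card (Fin #F) :=
        ENat.card_le_card_of_factorsThrough (g := g) ConnectedComponents.surjective_coe ?_
    _ = #F := by simp
  intro w₁ w₂ hg
  wlog hle : argIoc a w₁ ≤ argIoc a w₂ generalizing w₁ w₂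
  · exact (this hg.symm (le_of_not_ge hle)).symm
  refine ConnectedComponents.mk_eq_of_isPreconnected
    (isPreconnected_Icc.image _ exp.continuous.continuousOn) ?_
    ⟨argIoc a w₁, ⟨le_rfl, hle⟩, exp_argIoc a w₁⟩ ⟨argIoc a w₂, ⟨hle, le_rfl⟩, exp_argIoc a w₂⟩
  rintro _ ⟨τ, hτ, rfl⟩ hτF
  have hτ' : τ ∈ Set.Ioc a (a + 2 * π) :=
    ⟨(argIoc_mem_Ioc a w₁).1.trans_le hτ.1, hτ.2.trans (argIoc_mem_Ioc a w₂).2⟩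
  refine F.apply_notMem_Icc_of_card_filter_lt_eq (argIoc a)
    (fun u hu h => w₂.2 (by rwa [← argIoc_injective a h])) (Fin.val_eq_of_eq hg) hτF ?_
  rwa [argIoc_exp hτ']

theorem card_connectedComponents_compl_le (F : Finset Circle) :
    ENat.card (ConnectedComponents ↥((F : Set Circle)ᶜ)) ≤ (max 1 F.card : ℕ) := by
  rcases F.eq_empty_or_nonempty with rfl | hF
  · have : PreconnectedSpace ↥((↑(∅ : Finset Circle) : Set Circle)ᶜ) :=
      Subtype.preconnectedSpace (by simpa using isPreconnected_univ)
    exact ENat.card_le_one.trans (by simp)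
  · exact (card_connectedComponents_compl_le_card hF).trans (by simp)

end Circle

theorem stmt_10_general {X : Type*} [TopologicalSpace X] (n : ℕ)
    (h : NCircleConnected X (n + 1)) (S : Finset X) (hS1 : 1 ≤ S.card) (hS2 : S.card ≤ n) :
    ENat.card (ConnectedComponents ↥((↑S : Set X)ᶜ)) ≤ (S.card : ℕ∞) := by
  classical
  refine ENat.card_le_of_forall_finset_card_le fun C hC => ?_
  choose rep hrep using ConnectedComponents.surjective_coe (α := ↥((S : Set X)ᶜ))
  obtain ⟨A, ⟨e⟩, hCA⟩ := h (C.image fun c => (rep c : X)) (Finset.card_image_le.trans (by omega))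
  set φ : Circle → X := fun w => e w
  have hφ : Continuous φ := continuous_subtype_val.comp e.continuous
  have hφinj : Injective φ := Subtype.val_injective.comp e.injective
  have hC_le : (C.card : ℕ∞) ≤ ENat.card (ConnectedComponents ↥(φ ⁻¹' (S : Set X)ᶜ)) := by
    refine hφ.card_le_card_connectedComponents_preimage C fun c hc => ⟨rep c, ?_, hrep c⟩
    have hA : (rep c : X) ∈ A := hCA (Finset.mem_image_of_mem _ hc)
    exact ⟨e.symm ⟨_, hA⟩, by simp [φ]⟩
  have hF := Circle.card_connectedComponents_compl_le (S.preimage φ hφinj.injOn)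
  have hF_card : (S.preimage φ hφinj.injOn).card ≤ S.card :=
    Finset.card_le_card_of_injOn φ (fun w hw => Finset.mem_preimage.mp hw) hφinj.injOn
  rw [Finset.coe_preimage] at hF
  exact_mod_cast hC_le.trans (hF.trans (Nat.cast_le.mpr (max_le hS1 hF_card)))

theorem stmt_10 {X : Type*} [TopologicalSpace X] [CompactSpace X] [ConnectedSpace X]
    [TopologicalSpace.MetrizableSpace X] (n : ℕ) (hn : 1 ≤ n)
    (h : NCircleConnected X (n + 1)) (S : Finset X) (hS1 : 1 ≤ S.card) (hS2 : S.card ≤ n) :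
    ENat.card (ConnectedComponents ↥((↑S : Set X)ᶜ)) ≤ (S.card : ℕ∞) :=
  stmt_10_general n h S hS1 hS2
end
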